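/- arXiv:1911.11086 — 7 statements merged into one kernel-verified Lean document; each statement's English description precedes it below -/
import Mathlib

section
/- In any epistemic BDT model, ex interim knowledge implies ex post knowledge: if K_α[α]Xφ holds at a situation ⟨m,h⟩, then X K_α Y [Ags]Xφ holds at ⟨m,h⟩. -/
/-- An epistemic branching discrete-time (BDT) structure, presented via its
moments, histories, the membership relation `mem m h` (moment `m` lies on
history `h`), next/prev moment functions along histories, choice partitions
(given as equivalence relations on the histories through each moment),
and epistemic indistinguishability relations on situations. -/
structure BDT where
  Moment : Type
  Hist : Type
  Agent : Type
  mem : Moment → Hist → Prop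
  next : Moment → Hist → Moment
  prev : Moment → Hist → Moment
  next_mem : ∀ m h, mem m h → mem (next m h) h
  prev_mem : ∀ m h, mem m h → mem (prev m h) h
  prev_next : ∀ m h, mem m h → prev (next m h) h = m
  next_prev : ∀ m h, mem m h → next (prev m h) h = m
  choice : Agent → Moment → Hist → Hist → Prop
  choice_sub : ∀ a m h h', mem m h → choice a m h h' → mem m h'
  choice_refl : ∀ a m h, mem m h → choice a m h h
  choice_symm : ∀ a m h h', choice a m h h' → choice a m h' h
  choice_trans : ∀ a m h h' h'', choice a m h h' → choice a m h' h'' → choice a m h h''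
  /-- no choice between undivided histories -/
  no_choice_undivided : ∀ a m h h', mem m h → mem m h' → next m h = next m h' →
    mem (next m h) h' → choice a m h h'
  /-- independence of agency: every selection of choices has nonempty intersection -/
  indep : ∀ m (s : Agent → Hist), (∀ a, mem m (s a)) →
    ∃ h, mem m h ∧ ∀ a, choice a m (s a) h
  indist : Agent → Moment × Hist → Moment × Hist → Prop
  indist_refl : ∀ a s, indist a s s
  indist_symm : ∀ a s t, indist a s t → indist a t s
  indist_trans : ∀ a s t u, indist a s t → indist a t u → indist a s u
  /-- no forget -/
  no_forget : ∀ a m h m' h', mem m h → indist a (next m h, h) (m', h') →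
    indist a (m, h) (prev m' h', h')

namespace BDT

variable (B : BDT)

/-- historical necessity □ -/
def boxS (φ : B.Moment → B.Hist → Prop) (m : B.Moment) (_h : B.Hist) : Prop :=
  ∀ h', B.mem m h' → φ m h'

/-- next operator X -/
def xS (φ : B.Moment → B.Hist → Prop) (m : B.Moment) (h : B.Hist) : Prop :=
  φ (B.next m h) h

/-- last operator Y -/
def yS (φ : B.Moment → B.Hist → Prop) (m : B.Moment) (h : B.Hist) : Prop :=
  φ (B.prev m h) h

/-- knowledge operator K_α -/
def kS (a : B.Agent) (φ : B.Moment → B.Hist → Prop) (m : B.Moment) (h : B.Hist) : Prop :=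
  ∀ m' h', B.indist a (m, h) (m', h') → φ m' h'

/-- individual stit operator [α] -/
def stit (a : B.Agent) (φ : B.Moment → B.Hist → Prop) (m : B.Moment) (h : B.Hist) : Prop :=
  ∀ h', B.choice a m h h' → φ m h'

/-- grand coalition stit operator [Ags] -/
def stitAgs (φ : B.Moment → B.Hist → Prop) (m : B.Moment) (h : B.Hist) : Prop :=
  ∀ h', (∀ a, B.choice a m h h') → φ m h'

end BDT

/-! "No forget" is the modal principle K_α ψ → X K_α Y ψ. Apply it to ψ = [Ags]Xφ, which
the agent knows as soon as it knows [α]Xφ, since the grand coalition's choice refines α's. -/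

namespace BDT

variable (B : BDT)

theorem kS_mono (a : B.Agent) {φ ψ : B.Moment → B.Hist → Prop}
    (hφψ : ∀ m h, φ m h → ψ m h) {m : B.Moment} {h : B.Hist} (hφ : B.kS a φ m h) :
    B.kS a ψ m h :=
  fun m' h' hind => hφψ m' h' (hφ m' h' hind)

theorem stitAgs_of_stit (a : B.Agent) {φ : B.Moment → B.Hist → Prop} {m : B.Moment}
    {h : B.Hist} (hφ : B.stit a φ m h) : B.stitAgs φ m h :=
  fun h' hch => hφ h' (hch a)

theorem xS_kS_yS_of_kS (a : B.Agent) {φ : B.Moment → B.Hist → Prop} {m : B.Moment}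
    {h : B.Hist} (hmem : B.mem m h) (hφ : B.kS a φ m h) :
    B.xS (B.kS a (B.yS φ)) m h :=
  fun m' h' hind => hφ _ _ (B.no_forget a m h m' h' hmem hind)

end BDT

/-- In any epistemic BDT model, ex interim knowledge implies ex post
knowledge: if K_α[α]Xφ holds at ⟨m,h⟩, then X K_α Y [Ags]Xφ holds at ⟨m,h⟩. -/
theorem exInterim_implies_exPost (B : BDT) (a : B.Agent)
    (φ : B.Moment → B.Hist → Prop) (m : B.Moment) (h : B.Hist)
    (hmem : B.mem m h)
    (hint : B.kS a (B.stit a (B.xS φ)) m h) :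
    B.xS (B.kS a (B.yS (B.stitAgs (B.xS φ)))) m h :=
  B.xS_kS_yS_of_kS a hmem (B.kS_mono a (fun _ _ => B.stitAgs_of_stit a) hint)
end

section
/- Semantic version of Duijf-style know-how collapse: in any Kripke model where ∼_α is an equivalence relation on worlds, R_□ is an equivalence relation, and the uniformity condition holds (if w ∼_α v then for every w' with wR_□w' there exists v' with vR_□v' and w' ∼_α v'), a world w satisfies ◇K_αψ if and only if it satisfies K_α◇K_αψ, where ◇ quantifies existentially over R_□-successors and K_α universally over ∼_α-successors. -/
theorem diamond_knows_of_sim {W : Type*} {Rb Sim : W → W → Prop} (hSim : IsTrans W Sim)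
    (hUnif : ∀ w v w', Sim w v → Rb w w' → ∃ v', Rb v v' ∧ Sim w' v')
    {ψ : W → Prop} {w x : W} (hwx : Sim w x) (h : ∃ v, Rb w v ∧ ∀ u, Sim v u → ψ u) :
    ∃ v, Rb x v ∧ ∀ u, Sim v u → ψ u := by
  obtain ⟨v, hwv, hK⟩ := h
  obtain ⟨v', hxv', hvv'⟩ := hUnif w x v hwx hwv
  exact ⟨v', hxv', fun u hv'u => hK u (hSim.trans _ _ _ hvv' hv'u)⟩

theorem knowhow_collapse_general {W : Type*} (Rb Sim : W → W → Prop)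
    (hSim : Equivalence Sim)
    (hUnif : ∀ w v w', Sim w v → Rb w w' → ∃ v', Rb v v' ∧ Sim w' v')
    (ψ : W → Prop) (w : W) :
    (∃ v, Rb w v ∧ ∀ u, Sim v u → ψ u) ↔
      (∀ x, Sim w x → ∃ v, Rb x v ∧ ∀ u, Sim v u → ψ u) :=
  ⟨fun h _ hwx => diamond_knows_of_sim hSim.isTrans hUnif hwx h,
    fun h => h w (hSim.refl w)⟩

/-- Semantic Duijf-style know-how collapse. In any Kripke model
where ∼_α and R_□ are equivalence relations on worlds and the uniformity
condition holds (if w ∼_α v and w R_□ w' then there exists v' with v R_□ v'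
and w' ∼_α v'), a world w satisfies ◇K_αψ iff it satisfies K_α◇K_αψ,
where ◇ quantifies existentially over R_□-successors and K_α universally
over ∼_α-successors. -/
theorem knowhow_collapse {W : Type*} (Rb Sim : W → W → Prop)
    (hRb : Equivalence Rb) (hSim : Equivalence Sim)
    (hUnif : ∀ w v w', Sim w v → Rb w w' → ∃ v', Rb v v' ∧ Sim w' v')
    (ψ : W → Prop) (w : W) :
    (∃ v, Rb w v ∧ ∀ u, Sim v u → ψ u) ↔
      (∀ x, Sim w x → ∃ v, Rb x v ∧ ∀ u, Sim v u → ψ u) :=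
  knowhow_collapse_general Rb Sim hSim hUnif ψ w
end

section
/- Canonical independence of agency: in the canonical model of a logic Λ containing S5 for □ and each [α], the schema □φ→[α]φ, and the axiom (IA): (⋀_{1≤i≤n} ◇[α_i]p_i) → ◇(⋀_{1≤i≤n}[α_i]p_i) for pairwise distinct agents α_1,...,α_n, the following holds: for every maximal consistent set w* and every selection of maximal consistent sets v_α ∈ \bar{w*} (one per agent α in a finite set Ags), the set ⋃_{α∈Ags} {[α]ψ : [α]ψ ∈ v_α} ∪ {□ψ : □ψ ∈ w*} is Λ-consistent. -/
namespace Stmt8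

variable (A : Type)

/-- Formulas with □ and [α] for each agent α in A. -/
inductive Form : Type
  | var : Nat → Form
  | bot : Form
  | imp : Form → Form → Form
  | box : Form → Form
  | act : A → Form → Form

namespace Form
variable {A}
def neg (φ : Form A) : Form A := imp φ bot
def conj (φ ψ : Form A) : Form A := neg (imp φ (neg ψ))
def top : Form A := neg bot
def dia (φ : Form A) : Form A := neg (box (neg φ))
def diaA (a : A) (φ : Form A) : Form A := neg (act a (neg φ))
end Form

variable {A}

def conjList : List (Form A) → Form A
  | [] => Form.top
  | φ :: l => Form.conj φ (conjList l)

def Consistent (Prov : Form A → Prop) (Γ : Set (Form A)) : Prop :=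
  ¬ ∃ l : List (Form A), (∀ φ ∈ l, φ ∈ Γ) ∧ Prov ((conjList l).imp Form.bot)

def MCS (Prov : Form A → Prop) (w : Set (Form A)) : Prop :=
  Consistent Prov w ∧ ∀ Γ, w ⊆ Γ → Consistent Prov Γ → Γ = w

open Form

/-!
Suppose a finite list `l` of members of the set derives `⊥`. Let `ψ_α` be the conjunction of
the `[α]`-formulas of `l` and `χ` that of its `□`-formulas. By axiom 4 for `[α]`,
`[α]ψ_α ∈ v_α`, and since `v_α` is `□`-accessible from `w*`, `◇[α]ψ_α ∈ w*`. (IA) merges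
these into `◇⋀_α [α]ψ_α ∈ w*`, and axiom 4 for `□` gives `□χ ∈ w*`, hence
`◇(⋀_α [α]ψ_α ∧ χ) ∈ w*`. By axiom T for each `[α]` the formula under `◇` derives every
member of `l`, hence `⊥`; so `□¬(⋀_α [α]ψ_α ∧ χ) ∈ w*` by necessitation, and `w*` is
inconsistent.
-/

structure HilbertSystem (Prov : Form A → Prop) : Prop where
  mp : ∀ {φ ψ : Form A}, Prov (φ.imp ψ) → Prov φ → Prov ψ
  a1 : ∀ φ ψ : Form A, Prov (φ.imp (ψ.imp φ))
  a2 : ∀ φ ψ χ : Form A, Prov ((φ.imp (ψ.imp χ)).imp ((φ.imp ψ).imp (φ.imp χ)))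
  a3 : ∀ φ ψ : Form A, Prov (((φ.neg).imp (ψ.neg)).imp (ψ.imp φ))

structure IsNormalModality (Prov : Form A → Prop) (m : Form A → Form A) : Prop where
  k : ∀ φ ψ : Form A, Prov ((m (φ.imp ψ)).imp ((m φ).imp (m ψ)))
  nec : ∀ {φ : Form A}, Prov φ → Prov (m φ)

theorem HilbertSystem.imp_self {Prov : Form A → Prop} (H : HilbertSystem Prov) (φ : Form A) :
    Prov (φ.imp φ) :=
  H.mp (H.mp (H.a2 φ (φ.imp φ) φ) (H.a1 φ (φ.imp φ))) (H.a1 φ φ)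

inductive Deriv (Prov : Form A → Prop) : List (Form A) → Form A → Prop
  | ax {Γ φ} : Prov φ → Deriv Prov Γ φ
  | hyp {Γ φ} : φ ∈ Γ → Deriv Prov Γ φ
  | mp {Γ φ ψ} : Deriv Prov Γ (φ.imp ψ) → Deriv Prov Γ φ → Deriv Prov Γ ψ

namespace Deriv

variable {Prov : Form A → Prop} {Γ Δ l : List (Form A)} {φ ψ : Form A}

theorem head : Deriv Prov (φ :: Γ) φ := .hyp List.mem_cons_self

theorem subst (d : Deriv Prov Γ φ) (h : ∀ ψ ∈ Γ, Deriv Prov Δ ψ) : Deriv Prov Δ φ := by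
  induction d with
  | ax hφ => exact .ax hφ
  | hyp hφ => exact h _ hφ
  | mp _ _ ih₁ ih₂ => exact .mp ih₁ ih₂

theorem weaken (d : Deriv Prov Γ φ) (h : Γ ⊆ Δ) : Deriv Prov Δ φ :=
  d.subst fun _ hψ => .hyp (h hψ)

theorem cons (d : Deriv Prov Γ φ) : Deriv Prov (ψ :: Γ) φ :=
  d.weaken (List.subset_cons_self _ _)

theorem deduction (H : HilbertSystem Prov) (d : Deriv Prov (ψ :: Γ) φ) :
    Deriv Prov Γ (ψ.imp φ) := by
  generalize hΔ : ψ :: Γ = Δ at d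
  induction d with
  | ax hφ => exact .mp (.ax (H.a1 _ _)) (.ax hφ)
  | hyp hφ =>
    subst hΔ
    rcases List.mem_cons.mp hφ with rfl | hφ
    · exact .ax (H.imp_self _)
    · exact .mp (.ax (H.a1 _ _)) (.hyp hφ)
  | mp _ _ ih₁ ih₂ => exact .mp (.mp (.ax (H.a2 _ _ _)) ih₁) ih₂

theorem toProv (H : HilbertSystem Prov) (d : Deriv Prov [] φ) : Prov φ := by
  generalize hΓ : ([] : List (Form A)) = Γ at d
  induction d with
  | ax hφ => exact hφ
  | hyp hφ => subst hΓ; cases hφ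
  | mp _ _ ih₁ ih₂ => exact H.mp ih₁ ih₂

theorem exfalso (H : HilbertSystem Prov) (d : Deriv Prov Γ bot) : Deriv Prov Γ φ :=
  .mp (.mp (.ax (H.a3 φ bot)) (.mp (.ax (H.a1 _ _)) (.ax (H.imp_self bot)))) d

theorem byContra (H : HilbertSystem Prov) (d : Deriv Prov (neg φ :: Γ) bot) :
    Deriv Prov Γ φ :=
  have dni : Deriv Prov [] ((neg φ).imp (neg (neg (neg φ)))) :=
    deduction H (deduction H (.mp head head.cons))
  .mp (.mp (.ax (H.a3 φ (neg (neg φ)))) (.ax (dni.toProv H))) (d.deduction H)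

theorem conj_intro (H : HilbertSystem Prov) (d₁ : Deriv Prov Γ φ) (d₂ : Deriv Prov Γ ψ) :
    Deriv Prov Γ (conj φ ψ) :=
  deduction H (.mp (.mp head d₁.cons) d₂.cons)

theorem conj_left (H : HilbertSystem Prov) (d : Deriv Prov Γ (conj φ ψ)) : Deriv Prov Γ φ :=
  byContra H (.mp d.cons (deduction H (exfalso H (.mp head.cons head))))

theorem conj_right (H : HilbertSystem Prov) (d : Deriv Prov Γ (conj φ ψ)) : Deriv Prov Γ ψ :=
  byContra H (.mp d.cons (.mp (.ax (H.a1 _ _)) head))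

theorem conjList_intro (H : HilbertSystem Prov) (h : ∀ φ ∈ l, Deriv Prov Γ φ) :
    Deriv Prov Γ (conjList l) := by
  induction l with
  | nil => exact deduction H head
  | cons φ l ih =>
    exact conj_intro H (h φ List.mem_cons_self)
      (ih fun ψ hψ => h ψ (List.mem_cons_of_mem _ hψ))

theorem of_conjList (H : HilbertSystem Prov) (d : Deriv Prov Γ (conjList l)) (hφ : φ ∈ l) :
    Deriv Prov Γ φ := by
  induction l with
  | nil => cases hφ
  | cons ψ l ih =>
    rcases List.mem_cons.mp hφ with rfl | hφ
    · exact conj_left H d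
    · exact ih (conj_right H d) hφ

theorem iff_prov_conjList_imp (H : HilbertSystem Prov) :
    Deriv Prov l φ ↔ Prov ((conjList l).imp φ) :=
  ⟨fun d => ((d.subst fun _ hψ => of_conjList H head hψ).deduction H).toProv H,
    fun h => .mp (.ax h) (conjList_intro H fun _ => .hyp)⟩

end Deriv

open Deriv

theorem IsNormalModality.deriv_map {Prov : Form A → Prop} {m : Form A → Form A}
    (hm : IsNormalModality Prov m) (H : HilbertSystem Prov) :
    ∀ {l : List (Form A)} {φ : Form A}, Deriv Prov l φ → Deriv Prov (l.map m) (m φ)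
  | [], _, d => .ax (hm.nec (d.toProv H))
  | ψ :: _, φ, d => .mp (.mp (.ax (hm.k ψ φ)) (hm.deriv_map H (d.deduction H)).cons) head

theorem deriv_dia_conj_of_box {Prov : Form A → Prop} (H : HilbertSystem Prov)
    (hbox : IsNormalModality Prov box) (φ ψ : Form A) :
    Deriv Prov [dia φ, box ψ] (dia (conj φ ψ)) :=
  have hneg : Deriv Prov [neg (conj φ ψ), ψ] (neg φ) :=
    deduction H (.mp head.cons (conj_intro H head head.cons.cons))
  deduction H (.mp head.cons ((hbox.deriv_map H hneg).weaken (by simp)))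

theorem consistent_iff {Prov : Form A → Prop} (H : HilbertSystem Prov) {Γ : Set (Form A)} :
    Consistent Prov Γ ↔ ¬ ∃ l : List (Form A), (∀ φ ∈ l, φ ∈ Γ) ∧ Deriv Prov l bot := by
  simp only [Consistent, Deriv.iff_prov_conjList_imp H]

def modalPart (m : Form A → Form A) (w : Set (Form A)) : Set (Form A) :=
  {φ | (∃ χ, φ = m χ) ∧ φ ∈ w}

namespace MCS

variable {Prov : Form A → Prop} (H : HilbertSystem Prov) {w : Set (Form A)} (hw : MCS Prov w)
  {l : List (Form A)} {φ ψ : Form A}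
include H hw

theorem exists_deriv_bot_of_not_mem (hφ : φ ∉ w) :
    ∃ m : List (Form A), (∀ ψ ∈ m, ψ ∈ w) ∧ Deriv Prov (φ :: m) bot := by
  classical
  have hinc : ¬ Consistent Prov (insert φ w) := fun hc =>
    hφ (hw.2 _ (Set.subset_insert φ w) hc ▸ Set.mem_insert φ w)
  rw [consistent_iff H, not_not] at hinc
  obtain ⟨m, hm, hbot⟩ := hinc
  refine ⟨m.filter (· ≠ φ), fun ψ hψ => ?_, hbot.subst fun ψ hψ => ?_⟩
  · obtain ⟨hψm, hne⟩ := List.mem_filter.mp hψ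
    exact (hm ψ hψm).resolve_left (by simpa using hne)
  · by_cases h : ψ = φ
    · exact h ▸ head
    · exact .hyp (List.mem_cons_of_mem _ (List.mem_filter.mpr ⟨hψ, by simpa using h⟩))

theorem mem_of_deriv (hl : ∀ φ ∈ l, φ ∈ w) (d : Deriv Prov l φ) : φ ∈ w := by
  by_contra hφ
  obtain ⟨m, hm, hbot⟩ := hw.exists_deriv_bot_of_not_mem H hφ
  refine (consistent_iff H).mp hw.1 ⟨l ++ m, fun ψ hψ => ?_, hbot.subst fun ψ hψ => ?_⟩
  · exact (List.mem_append.mp hψ).elim (hl ψ) (hm ψ)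
  · rcases List.mem_cons.mp hψ with rfl | hψ
    · exact d.weaken (List.subset_append_left _ _)
    · exact .hyp (List.mem_append_right _ hψ)

theorem mem_of_prov_imp (h : Prov (φ.imp ψ)) (hφ : φ ∈ w) : ψ ∈ w :=
  hw.mem_of_deriv H (by simpa using hφ) (.mp (.ax h) (head (Γ := [])))

theorem conjList_mem (hl : ∀ φ ∈ l, φ ∈ w) : conjList l ∈ w :=
  hw.mem_of_deriv H hl (conjList_intro H fun _ => .hyp)

theorem neg_mem_of_not_mem (hφ : φ ∉ w) : neg φ ∈ w :=
  let ⟨_, hm, hbot⟩ := hw.exists_deriv_bot_of_not_mem H hφ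
  hw.mem_of_deriv H hm (hbot.deduction H)

theorem neg_not_mem (hφ : φ ∈ w) : neg φ ∉ w := fun hn =>
  (consistent_iff H).mp hw.1 ⟨[neg φ, φ], by simp [hφ, hn], .mp head head.cons⟩

theorem modal_conjList_mem {m : Form A → Form A} (hm : IsNormalModality Prov m)
    (four : ∀ φ, Prov ((m φ).imp (m (m φ)))) (hl : ∀ φ ∈ l, φ ∈ modalPart m w) :
    m (conjList l) ∈ w := by
  refine hw.mem_of_deriv H (l := l.map m) ?_ (hm.deriv_map H (conjList_intro H fun _ => .hyp))
  simp only [List.mem_map]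
  rintro _ ⟨_, hφ, rfl⟩
  obtain ⟨⟨χ, rfl⟩, hχ⟩ := hl _ hφ
  exact hw.mem_of_prov_imp H (four χ) hχ

theorem dia_mem_of_mem {v : Set (Form A)} (hv : MCS Prov v)
    (hwv : ∀ φ, box φ ∈ w → φ ∈ v) (hφ : φ ∈ v) : dia φ ∈ w := by
  by_contra hdia
  have hbox : box (neg φ) ∈ w :=
    hw.mem_of_deriv H (l := [neg (dia φ)]) (by simpa using hw.neg_mem_of_not_mem H hdia)
      (byContra H (.mp head.cons head))
  exact hv.neg_not_mem H hφ (hwv _ hbox)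

theorem dia_not_mem_of_deriv_bot (hbox : IsNormalModality Prov box) (d : Deriv Prov [φ] bot) :
    dia φ ∉ w :=
  have hbox_neg : box (neg φ) ∈ w :=
    hw.mem_of_deriv H (l := []) (by simp) (.ax (hbox.nec ((d.deduction H).toProv H)))
  hw.neg_not_mem H hbox_neg

end MCS

theorem canonical_independence_of_agency_general [Fintype A]
    (Prov : Form A → Prop)
    (mp : ∀ {φ ψ : Form A}, Prov (φ.imp ψ) → Prov φ → Prov ψ)
    (a1 : ∀ φ ψ : Form A, Prov (φ.imp (ψ.imp φ)))
    (a2 : ∀ φ ψ χ : Form A, Prov ((φ.imp (ψ.imp χ)).imp ((φ.imp ψ).imp (φ.imp χ))))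
    (a3 : ∀ φ ψ : Form A, Prov (((φ.neg).imp (ψ.neg)).imp (ψ.imp φ)))
    (kBox : ∀ φ ψ : Form A, Prov ((box (φ.imp ψ)).imp ((box φ).imp (box ψ))))
    (fourBox : ∀ φ : Form A, Prov ((box φ).imp (box (box φ))))
    (necBox : ∀ {φ : Form A}, Prov φ → Prov (box φ))
    (kA : ∀ (a : A) (φ ψ : Form A),
      Prov ((act a (φ.imp ψ)).imp ((act a φ).imp (act a ψ))))
    (tA : ∀ (a : A) (φ : Form A), Prov ((act a φ).imp φ))
    (fourA : ∀ (a : A) (φ : Form A), Prov ((act a φ).imp (act a (act a φ))))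
    (necA : ∀ (a : A) {φ : Form A}, Prov φ → Prov (act a φ))
    -- (IA): for pairwise distinct agents α₁,…,α_n and formulas p₁,…,p_n,
    -- ⋀◇[α_i]p_i → ◇⋀[α_i]p_i
    (ia : ∀ l : List (A × Form A), (l.map Prod.fst).Nodup →
      Prov ((conjList (l.map fun p => dia (act p.1 p.2))).imp
        (dia (conjList (l.map fun p => act p.1 p.2))))) :
    ∀ (wstar : Set (Form A)) (v : A → Set (Form A)),
      MCS Prov wstar → (∀ a, MCS Prov (v a)) →
      (∀ (a : A) (φ : Form A), box φ ∈ wstar → φ ∈ v a) →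
      Consistent Prov
        ((⋃ a : A, {φ : Form A | (∃ χ, φ = act a χ) ∧ φ ∈ v a}) ∪
          {φ : Form A | (∃ χ, φ = box χ) ∧ φ ∈ wstar}) := by
  classical
  intro wstar v hw hv hwv
  have H : HilbertSystem Prov := ⟨mp, a1, a2, a3⟩
  have hBox : IsNormalModality Prov box := ⟨kBox, necBox⟩
  change Consistent Prov ((⋃ a, modalPart (act a) (v a)) ∪ modalPart box wstar)
  rw [consistent_iff H]
  rintro ⟨l, hlΓ, hl⟩
  let ψ a := conjList (l.filter (· ∈ modalPart (act a) (v a)))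
  let χ := conjList (l.filter (· ∈ modalPart box wstar))
  let pairs := Finset.univ.toList.map fun a => (a, ψ a)
  let X := conjList (pairs.map fun p => act p.1 p.2)
  have hψ a : act a (ψ a) ∈ v a :=
    (hv a).modal_conjList_mem H ⟨kA a, necA a⟩ (fourA a) fun _ hφ =>
      of_decide_eq_true (List.mem_filter.mp hφ).2
  have hX : dia X ∈ wstar := by
    refine hw.mem_of_prov_imp H (ia pairs ?_) (hw.conjList_mem H ?_)
    · simpa [pairs, List.map_map, Function.comp_def] using Finset.nodup_toList _
    · simpa [pairs] using fun a => hw.dia_mem_of_mem H (hv a) (hwv a) (hψ a)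
  have hχ : box χ ∈ wstar :=
    hw.modal_conjList_mem H hBox fourBox fun _ hφ => of_decide_eq_true (List.mem_filter.mp hφ).2
  have hθ : dia (conj X χ) ∈ wstar :=
    hw.mem_of_deriv H (by simp [hX, hχ]) (deriv_dia_conj_of_box H hBox X χ)
  refine hw.dia_not_mem_of_deriv_bot H hBox (hl.subst fun φ hφ => ?_) hθ
  rcases hlΓ φ hφ with hφ' | hφ'
  · obtain ⟨a, ha⟩ := Set.mem_iUnion.mp hφ'
    have hact : Deriv Prov [conj X χ] (act a (ψ a)) :=
      (conj_left H head).of_conjList H (by simp [pairs])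
    exact (Deriv.mp (.ax (tA a _)) hact).of_conjList H
      (List.mem_filter.mpr ⟨hφ, decide_eq_true ha⟩)
  · exact (conj_right H head).of_conjList H (List.mem_filter.mpr ⟨hφ, decide_eq_true hφ'⟩)

/-- Canonical independence of agency. In the canonical model of a
logic Λ containing S5 for □ and each [α], the schema □φ→[α]φ, and the axiom
(IA), for every maximal consistent set w* and every selection of maximal
consistent sets v_α ∈ \bar{w*} (one per agent in the finite set Ags), the set
⋃_{α∈Ags} {[α]ψ : [α]ψ ∈ v_α} ∪ {□ψ : □ψ ∈ w*} is Λ-consistent. -/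
theorem canonical_independence_of_agency [Fintype A] [DecidableEq A]
    (Prov : Form A → Prop)
    (mp : ∀ {φ ψ : Form A}, Prov (φ.imp ψ) → Prov φ → Prov ψ)
    (a1 : ∀ φ ψ : Form A, Prov (φ.imp (ψ.imp φ)))
    (a2 : ∀ φ ψ χ : Form A, Prov ((φ.imp (ψ.imp χ)).imp ((φ.imp ψ).imp (φ.imp χ))))
    (a3 : ∀ φ ψ : Form A, Prov (((φ.neg).imp (ψ.neg)).imp (ψ.imp φ)))
    (kBox : ∀ φ ψ : Form A, Prov ((box (φ.imp ψ)).imp ((box φ).imp (box ψ))))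
    (tBox : ∀ φ : Form A, Prov ((box φ).imp φ))
    (fourBox : ∀ φ : Form A, Prov ((box φ).imp (box (box φ))))
    (fiveBox : ∀ φ : Form A, Prov ((dia φ).imp (box (dia φ))))
    (necBox : ∀ {φ : Form A}, Prov φ → Prov (box φ))
    (kA : ∀ (a : A) (φ ψ : Form A),
      Prov ((act a (φ.imp ψ)).imp ((act a φ).imp (act a ψ))))
    (tA : ∀ (a : A) (φ : Form A), Prov ((act a φ).imp φ))
    (fourA : ∀ (a : A) (φ : Form A), Prov ((act a φ).imp (act a (act a φ))))
    (fiveA : ∀ (a : A) (φ : Form A), Prov ((diaA a φ).imp (act a (diaA a φ))))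
    (necA : ∀ (a : A) {φ : Form A}, Prov φ → Prov (act a φ))
    (set_ax : ∀ (a : A) (φ : Form A), Prov ((box φ).imp (act a φ)))
    -- (IA): for pairwise distinct agents α₁,…,α_n and formulas p₁,…,p_n,
    -- ⋀◇[α_i]p_i → ◇⋀[α_i]p_i
    (ia : ∀ l : List (A × Form A), (l.map Prod.fst).Nodup →
      Prov ((conjList (l.map fun p => dia (act p.1 p.2))).imp
        (dia (conjList (l.map fun p => act p.1 p.2))))) :
    ∀ (wstar : Set (Form A)) (v : A → Set (Form A)),
      MCS Prov wstar → (∀ a, MCS Prov (v a)) →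
      (∀ (a : A) (φ : Form A), box φ ∈ wstar → φ ∈ v a) →
      Consistent Prov
        ((⋃ a : A, {φ : Form A | (∃ χ, φ = act a χ) ∧ φ ∈ v a}) ∪
          {φ : Form A | (∃ χ, φ = box χ) ∧ φ ∈ wstar}) :=
  canonical_independence_of_agency_general Prov mp a1 a2 a3 kBox fourBox necBox kA tA fourA necA ia

end Stmt8
end

section
/- In a super-additive Kripke-exstit n-model with irreflexive next/last relations, if wR_□w' then for every v in h^-[w] there exists v' in h^-[w'] with vR_{Ags}v', where h^-[w] is the set of R_Y-ancestors of w (Lemma on history matching via group action). -/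
/-!
Since `R_Y` is deterministic and undone by `R_X`, a step `a R_Y b` back in time means
`b R_X a`. So if `a R_□ a'`, then `(NAgs)_K`, applied to `b R_Ags b R_X a R_□ a'`, gives
`z` with `b R_Ags z R_X a'`, and then `a' R_Y z`: a past step from `a` is matched by one
from `a'`. Since `R_Ags ⊆ R_□`, the matched pair is again `R_□`-related, so the matching
propagates along the whole chain of `R_Y`-ancestors of `w`.
-/

/-- Composition of relations: w (R ∘ S) v iff there is u with w R u and u S v. -/
def RelComp {W : Type*} (R S : W → W → Prop) (w v : W) : Prop :=
  ∃ u, R w u ∧ S u v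

section

variable {W : Type*}

theorem RelComp.rel_of_left_deterministic {R S : W → W → Prop}
    (hdet : ∀ w v v', R w v → R w v' → v = v') (hid : ∀ w, RelComp R S w w)
    {a b : W} (hab : R a b) : S b a := by
  obtain ⟨u, hau, hua⟩ := hid a
  rwa [hdet a u b hau hab] at hua

theorem exists_transGen_of_step {Rb RY RAgs : W → W → Prop}
    (hSub : ∀ w v, RAgs w v → Rb w v)
    (step : ∀ a b a', RY a b → Rb a a' → ∃ z, RY a' z ∧ RAgs b z)
    {w w' v : W} (hww' : Rb w w') (hv : Relation.TransGen RY w v) :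
    ∃ v', Relation.TransGen RY w' v' ∧ RAgs v v' := by
  induction hv with
  | single hwb =>
    obtain ⟨z, hw'z, hbz⟩ := step _ _ _ hwb hww'
    exact ⟨z, .single hw'z, hbz⟩
  | tail _ hbc ih =>
    obtain ⟨b', hw'b', hbb'⟩ := ih
    obtain ⟨z, hb'z, hcz⟩ := step _ _ _ hbc (hSub _ _ hbb')
    exact ⟨z, hw'b'.tail hb'z, hcz⟩

end

theorem history_matching_general {W : Type*} (Rb RX RY RAgs : W → W → Prop)
    (hRAgs : Equivalence RAgs)
    (hSub : ∀ w v, RAgs w v → Rb w v)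
    (hXdet : ∀ w v v', RX w v → RX w v' → v = v')
    (hYdet : ∀ w v v', RY w v → RY w v' → v = v')
    (hXY : ∀ w v, RelComp RX RY w v ↔ w = v)
    (hYX : ∀ w v, RelComp RY RX w v ↔ w = v)
    (hNAgs : ∀ v o, RelComp RAgs (RelComp RX Rb) v o → RelComp RAgs RX v o) :
    ∀ w w', Rb w w' →
      ∀ v, Relation.TransGen RY w v →
        ∃ v', Relation.TransGen RY w' v' ∧ RAgs v v' := by
  have step : ∀ a b a', RY a b → Rb a a' → ∃ z, RY a' z ∧ RAgs b z := by
    intro a b a' hab haa'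
    have hba : RX b a :=
      RelComp.rel_of_left_deterministic hYdet (fun w ↦ (hYX w w).2 rfl) hab
    obtain ⟨z, hbz, hza'⟩ := hNAgs b a' ⟨b, hRAgs.refl b, a, hba, haa'⟩
    exact ⟨z, RelComp.rel_of_left_deterministic hXdet (fun w ↦ (hXY w w).2 rfl) hza', hbz⟩
  intro w w' hww' v hv
  exact exists_transGen_of_step hSub step hww' hv

/-- In a super-additive Kripke-exstit n-model with irreflexive
next/last relations, if w R_□ w' then for every v ∈ h^-[w] (an R_Y-ancestor of
w) there exists v' ∈ h^-[w'] with v R_{Ags} v'. Here R_□ and R_{Ags} are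
equivalence relations with R_{Ags} ⊆ R_□, R_X and R_Y are serial,
deterministic, mutually inverse and irreflexive, and the condition (NAgs)_K
holds: if v R_{Ags} v', v' R_X o' and o' R_□ o then there is z with
v R_{Ags} z and z R_X o. -/
theorem history_matching {W : Type*} (Rb RX RY RAgs : W → W → Prop)
    (hRb : Equivalence Rb) (hRAgs : Equivalence RAgs)
    (hSub : ∀ w v, RAgs w v → Rb w v)
    (hXser : ∀ w, ∃ v, RX w v) (hXdet : ∀ w v v', RX w v → RX w v' → v = v')
    (hYser : ∀ w, ∃ v, RY w v) (hYdet : ∀ w v v', RY w v → RY w v' → v = v')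
    (hXY : ∀ w v, RelComp RX RY w v ↔ w = v)
    (hYX : ∀ w v, RelComp RY RX w v ↔ w = v)
    (hXirr : ∀ w, ¬ RX w w) (hYirr : ∀ w, ¬ RY w w)
    (hNAgs : ∀ v o, RelComp RAgs (RelComp RX Rb) v o → RelComp RAgs RX v o) :
    ∀ w w', Rb w w' →
      ∀ v, Relation.TransGen RY w v →
        ∃ v', Relation.TransGen RY w' v' ∧ RAgs v v' :=
  history_matching_general Rb RX RY RAgs hRAgs hSub hXdet hYdet hXY hYX hNAgs
end

section
/- In any normal bimodal logic with serial-deterministic temporal operators X and Y satisfying the axioms YXφ ↔ φ, XYφ ↔ φ, Xφ ↔ ¬X¬φ, Yφ ↔ ¬Y¬φ, together with an S5 modality □ and an S5 modality [Ags] satisfying □φ→[Ags]φ and [Ags]Xφ→[Ags]X□φ, the theorem □Xφ → X□φ is derivable; moreover, from this theorem, necessitation for Y and □, and XYφ↔φ, the theorem Y□φ → □Yφ is derivable. -/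
/-!
(NX) is the chain □Xφ → [Ags]Xφ → [Ags]X□φ → X□φ given by SET+GA, (NAgs) and T for [Ags].
(NY) is its mirror image: apply (NX) to Yφ under □ and Y, and cancel the X against the Y on both
sides with XYφ ↔ φ and YXψ ↔ ψ.
-/

namespace Stmt15

/-- Formulas with temporal operators X, Y, historical necessity □ and [Ags]. -/
inductive Form : Type
  | var : Nat → Form
  | bot : Form
  | imp : Form → Form → Form
  | next : Form → Form
  | last : Form → Form
  | box : Form → Form
  | ags : Form → Form

namespace Form
def neg (φ : Form) : Form := imp φ bot
def conj (φ ψ : Form) : Form := neg (imp φ (neg ψ))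
def equiv (φ ψ : Form) : Form := conj (imp φ ψ) (imp ψ φ)
def dia (φ : Form) : Form := neg (box (neg φ))
def diaAgs (φ : Form) : Form := neg (ags (neg φ))
end Form

open Form

structure HilbertPC (Prov : Form → Prop) : Prop where
  mp : ∀ {φ ψ : Form}, Prov (φ.imp ψ) → Prov φ → Prov ψ
  a1 : ∀ φ ψ : Form, Prov (φ.imp (ψ.imp φ))
  a2 : ∀ φ ψ χ : Form, Prov ((φ.imp (ψ.imp χ)).imp ((φ.imp ψ).imp (φ.imp χ)))
  a3 : ∀ φ ψ : Form, Prov (((φ.neg).imp (ψ.neg)).imp (ψ.imp φ))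

namespace HilbertPC

variable {Prov : Form → Prop} {φ ψ χ : Form}

theorem imp_self (H : HilbertPC Prov) (φ : Form) : Prov (φ.imp φ) :=
  H.mp (H.mp (H.a2 φ (φ.imp φ) φ) (H.a1 φ (φ.imp φ))) (H.a1 φ φ)

theorem imp_imp_imp_right (H : HilbertPC Prov) (h : Prov (ψ.imp χ)) :
    Prov ((φ.imp ψ).imp (φ.imp χ)) :=
  H.mp (H.a2 φ ψ χ) (H.mp (H.a1 (ψ.imp χ) φ) h)

theorem imp_trans (H : HilbertPC Prov) (h₁ : Prov (φ.imp ψ)) (h₂ : Prov (ψ.imp χ)) :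
    Prov (φ.imp χ) :=
  H.mp (H.imp_imp_imp_right h₂) h₁

theorem bot_imp (H : HilbertPC Prov) (φ : Form) : Prov (bot.imp φ) :=
  H.mp (H.a3 φ bot) (H.mp (H.a1 (bot.imp bot) φ.neg) (H.imp_self bot))

theorem imp_neg_neg (H : HilbertPC Prov) (φ : Form) : Prov (φ.imp φ.neg.neg) :=
  H.imp_trans (H.a1 φ φ.neg) (H.mp (H.a2 φ.neg φ bot) (H.imp_self φ.neg))

theorem neg_neg_imp (H : HilbertPC Prov) (φ : Form) : Prov (φ.neg.neg.imp φ) :=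
  H.mp (H.a3 φ φ.neg.neg) (H.imp_neg_neg φ.neg)

theorem conj_left (H : HilbertPC Prov) (h : Prov (φ.conj ψ)) : Prov φ :=
  H.mp (H.neg_neg_imp φ) (H.imp_trans (H.imp_imp_imp_right (H.bot_imp ψ.neg)) h)

theorem conj_right (H : HilbertPC Prov) (h : Prov (φ.conj ψ)) : Prov ψ :=
  H.mp (H.neg_neg_imp ψ) (H.imp_trans (H.a1 ψ.neg φ) h)

theorem equiv_mp (H : HilbertPC Prov) (h : Prov (φ.equiv ψ)) : Prov (φ.imp ψ) :=
  H.conj_left h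

theorem equiv_mpr (H : HilbertPC Prov) (h : Prov (φ.equiv ψ)) : Prov (ψ.imp φ) :=
  H.conj_right h

theorem imp_map_of_normal (H : HilbertPC Prov) {f : Form → Form}
    (k : ∀ φ ψ : Form, Prov ((f (φ.imp ψ)).imp ((f φ).imp (f ψ))))
    (nec : ∀ {φ : Form}, Prov φ → Prov (f φ)) (h : Prov (φ.imp ψ)) :
    Prov ((f φ).imp (f ψ)) :=
  H.mp (k φ ψ) (nec h)

theorem box_next_imp_next_box (H : HilbertPC Prov)
    (tAgs : ∀ φ : Form, Prov ((ags φ).imp φ))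
    (setga : ∀ φ : Form, Prov ((box φ).imp (ags φ)))
    (nags : ∀ φ : Form, Prov ((ags (next φ)).imp (ags (next (box φ))))) (φ : Form) :
    Prov ((box (next φ)).imp (next (box φ))) :=
  H.imp_trans (H.imp_trans (setga (next φ)) (nags φ)) (tAgs (next (box φ)))

theorem last_box_imp_box_last (H : HilbertPC Prov)
    (kY : ∀ φ ψ : Form, Prov ((last (φ.imp ψ)).imp ((last φ).imp (last ψ))))
    (necY : ∀ {φ : Form}, Prov φ → Prov (last φ))
    (kBox : ∀ φ ψ : Form, Prov ((box (φ.imp ψ)).imp ((box φ).imp (box ψ))))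
    (necBox : ∀ {φ : Form}, Prov φ → Prov (box φ))
    (in1 : ∀ φ : Form, Prov (equiv (last (next φ)) φ))
    (in2 : ∀ φ : Form, Prov (equiv (next (last φ)) φ))
    (nx : ∀ φ : Form, Prov ((box (next φ)).imp (next (box φ)))) (φ : Form) :
    Prov ((last (box φ)).imp (box (last φ))) := by
  have box_imp_next : Prov ((box φ).imp (next (box (last φ)))) :=
    H.imp_trans (H.imp_map_of_normal kBox necBox (H.equiv_mpr (in2 φ))) (nx (last φ))
  exact H.imp_trans (H.imp_map_of_normal kY necY box_imp_next) (H.equiv_mp (in1 _))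

end HilbertPC

theorem NX_and_NY_derivable_general (Prov : Form → Prop)
    (mp : ∀ {φ ψ : Form}, Prov (φ.imp ψ) → Prov φ → Prov ψ)
    (a1 : ∀ φ ψ : Form, Prov (φ.imp (ψ.imp φ)))
    (a2 : ∀ φ ψ χ : Form, Prov ((φ.imp (ψ.imp χ)).imp ((φ.imp ψ).imp (φ.imp χ))))
    (a3 : ∀ φ ψ : Form, Prov (((φ.neg).imp (ψ.neg)).imp (ψ.imp φ)))
    -- normality and necessitation for all operators
    (kY : ∀ φ ψ : Form, Prov ((last (φ.imp ψ)).imp ((last φ).imp (last ψ))))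
    (necY : ∀ {φ : Form}, Prov φ → Prov (last φ))
    (kBox : ∀ φ ψ : Form, Prov ((box (φ.imp ψ)).imp ((box φ).imp (box ψ))))
    (necBox : ∀ {φ : Form}, Prov φ → Prov (box φ))
    -- S5 for □ and [Ags]
    (tAgs : ∀ φ : Form, Prov ((ags φ).imp φ))
    -- temporal axioms
    (in1 : ∀ φ : Form, Prov (equiv (last (next φ)) φ))
    (in2 : ∀ φ : Form, Prov (equiv (next (last φ)) φ))
    -- interaction axioms
    (setga : ∀ φ : Form, Prov ((box φ).imp (ags φ)))
    (nags : ∀ φ : Form, Prov ((ags (next φ)).imp (ags (next (box φ))))) :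
    (∀ φ : Form, Prov ((box (next φ)).imp (next (box φ)))) ∧
      (∀ φ : Form, Prov ((last (box φ)).imp (box (last φ)))) := by
  have H : HilbertPC Prov := ⟨mp, a1, a2, a3⟩
  have nx := H.box_next_imp_next_box tAgs setga nags
  exact ⟨nx, H.last_box_imp_box_last kY necY kBox necBox in1 in2 nx⟩

/-- In any normal bimodal logic with serial-deterministic
temporal operators X, Y satisfying YXφ↔φ, XYφ↔φ, Xφ↔¬X¬φ, Yφ↔¬Y¬φ, together
with S5 modalities □ and [Ags] satisfying □φ→[Ags]φ and [Ags]Xφ→[Ags]X□φ,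
the theorem (NX): □Xφ → X□φ is derivable; moreover the theorem
(NY): Y□φ → □Yφ is derivable. -/
theorem NX_and_NY_derivable (Prov : Form → Prop)
    (mp : ∀ {φ ψ : Form}, Prov (φ.imp ψ) → Prov φ → Prov ψ)
    (a1 : ∀ φ ψ : Form, Prov (φ.imp (ψ.imp φ)))
    (a2 : ∀ φ ψ χ : Form, Prov ((φ.imp (ψ.imp χ)).imp ((φ.imp ψ).imp (φ.imp χ))))
    (a3 : ∀ φ ψ : Form, Prov (((φ.neg).imp (ψ.neg)).imp (ψ.imp φ)))
    -- normality and necessitation for all operators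
    (kX : ∀ φ ψ : Form, Prov ((next (φ.imp ψ)).imp ((next φ).imp (next ψ))))
    (necX : ∀ {φ : Form}, Prov φ → Prov (next φ))
    (kY : ∀ φ ψ : Form, Prov ((last (φ.imp ψ)).imp ((last φ).imp (last ψ))))
    (necY : ∀ {φ : Form}, Prov φ → Prov (last φ))
    (kBox : ∀ φ ψ : Form, Prov ((box (φ.imp ψ)).imp ((box φ).imp (box ψ))))
    (necBox : ∀ {φ : Form}, Prov φ → Prov (box φ))
    (kAgs : ∀ φ ψ : Form, Prov ((ags (φ.imp ψ)).imp ((ags φ).imp (ags ψ))))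
    (necAgs : ∀ {φ : Form}, Prov φ → Prov (ags φ))
    -- S5 for □ and [Ags]
    (tBox : ∀ φ : Form, Prov ((box φ).imp φ))
    (fourBox : ∀ φ : Form, Prov ((box φ).imp (box (box φ))))
    (fiveBox : ∀ φ : Form, Prov ((dia φ).imp (box (dia φ))))
    (tAgs : ∀ φ : Form, Prov ((ags φ).imp φ))
    (fourAgs : ∀ φ : Form, Prov ((ags φ).imp (ags (ags φ))))
    (fiveAgs : ∀ φ : Form, Prov ((diaAgs φ).imp (ags (diaAgs φ))))
    -- temporal axioms
    (in1 : ∀ φ : Form, Prov (equiv (last (next φ)) φ))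
    (in2 : ∀ φ : Form, Prov (equiv (next (last φ)) φ))
    (detX : ∀ φ : Form, Prov (equiv (next φ) (neg (next (neg φ)))))
    (detY : ∀ φ : Form, Prov (equiv (last φ) (neg (last (neg φ)))))
    -- interaction axioms
    (setga : ∀ φ : Form, Prov ((box φ).imp (ags φ)))
    (nags : ∀ φ : Form, Prov ((ags (next φ)).imp (ags (next (box φ))))) :
    (∀ φ : Form, Prov ((box (next φ)).imp (next (box φ)))) ∧
      (∀ φ : Form, Prov ((last (box φ)).imp (box (last φ)))) :=
  NX_and_NY_derivable_general Prov mp a1 a2 a3 kY necY kBox necBox tAgs in1 in2 setga nags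

end Stmt15
end

section
/- Choice-boundedness from the counting axiom: in the canonical model of Λ_n, which includes the axiom (AgsPC_n): ⋀_{1≤k≤n} ◇((⋀_{1≤i≤k−1}¬φ_i) ∧ [Ags]φ_k) → ⋁_{1≤k≤n}φ_k, for every maximal consistent set w the partition of \bar{w} induced by the canonical relation R_{Ags} has at most n cells. -/
namespace Stmt16

/-- Formulas with □ and [Ags]. -/
inductive Form : Type
  | var : Nat → Form
  | bot : Form
  | imp : Form → Form → Form
  | box : Form → Form
  | ags : Form → Form

namespace Form
def neg (φ : Form) : Form := imp φ bot
def conj (φ ψ : Form) : Form := neg (imp φ (neg ψ))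
def disj (φ ψ : Form) : Form := (neg φ).imp ψ
def top : Form := neg bot
def dia (φ : Form) : Form := neg (box (neg φ))
def diaAgs (φ : Form) : Form := neg (ags (neg φ))
end Form

def conjList : List Form → Form
  | [] => Form.top
  | φ :: l => Form.conj φ (conjList l)

def disjList : List Form → Form
  | [] => Form.bot
  | φ :: l => Form.disj φ (disjList l)

/-- The antecedent conjuncts of (AgsPC_n): for the list φ₁,…,φ_n, the k-th
conjunct is ◇((¬φ₁∧…∧¬φ_{k-1}) ∧ [Ags]φ_k). -/
def anteList (pre : List Form) : List Form → List Form
  | [] => []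
  | φ :: rest =>
      Form.dia (Form.conj (conjList (pre.map Form.neg)) (Form.ags φ)) ::
        anteList (pre ++ [φ]) rest

def Consistent (Prov : Form → Prop) (Γ : Set Form) : Prop :=
  ¬ ∃ l : List Form, (∀ φ ∈ l, φ ∈ Γ) ∧ Prov ((conjList l).imp Form.bot)

def MCS (Prov : Form → Prop) (w : Set Form) : Prop :=
  Consistent Prov w ∧ ∀ Γ, w ⊆ Γ → Consistent Prov Γ → Γ = w

open Form

/-!
If `c 0, …, c n` were pairwise unrelated by `R_{Ags}`, conjoining separating formulas would give
`α i` with `[Ags] α i ∈ c i` and `α i ∉ c j` for `j ≠ i`. All cells are `R_□`-accessible from `w`,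
so by axiom 5 every `◇`-formula true in some cell holds in `c 0`; the cell `c k` witnesses the
`k`-th antecedent `◇(¬α 1 ∧ … ∧ ¬α (k-1) ∧ [Ags] α k)` of (AgsPC_n) for `α 1, …, α n`. Hence
`c 0` contains some `α k`, a contradiction.
-/

structure ClassicalHilbert (Prov : Form → Prop) : Prop where
  mp : ∀ {φ ψ : Form}, Prov (φ.imp ψ) → Prov φ → Prov ψ
  a1 : ∀ φ ψ : Form, Prov (φ.imp (ψ.imp φ))
  a2 : ∀ φ ψ χ : Form, Prov ((φ.imp (ψ.imp χ)).imp ((φ.imp ψ).imp (φ.imp χ)))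
  a3 : ∀ φ ψ : Form, Prov (((φ.neg).imp (ψ.neg)).imp (ψ.imp φ))

theorem ClassicalHilbert.imp_self {Prov : Form → Prop} (H : ClassicalHilbert Prov)
    (φ : Form) : Prov (φ.imp φ) :=
  H.mp (H.mp (H.a2 φ (φ.imp φ) φ) (H.a1 φ (φ.imp φ))) (H.a1 φ φ)

inductive Derives (Prov : Form → Prop) : List Form → Form → Prop
  | ax {Γ : List Form} {φ : Form} : Prov φ → Derives Prov Γ φ
  | hyp {Γ : List Form} {φ : Form} : φ ∈ Γ → Derives Prov Γ φ
  | mp {Γ : List Form} {φ ψ : Form} :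
      Derives Prov Γ (φ.imp ψ) → Derives Prov Γ φ → Derives Prov Γ ψ

namespace Derives

variable {Prov : Form → Prop} {Γ Δ : List Form} {φ ψ : Form}

theorem trans (h : Derives Prov Γ φ) (hΓ : ∀ ψ ∈ Γ, Derives Prov Δ ψ) :
    Derives Prov Δ φ := by
  induction h with
  | ax h => exact ax h
  | hyp h => exact hΓ _ h
  | mp _ _ ih₁ ih₂ => exact mp ih₁ ih₂

theorem mono (h : Derives Prov Γ φ) (hΓ : Γ ⊆ Δ) : Derives Prov Δ φ :=
  h.trans fun _ hψ => hyp (hΓ hψ)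

theorem map_ags (kAgs : ∀ φ ψ : Form, Prov ((ags (φ.imp ψ)).imp ((ags φ).imp (ags ψ))))
    (necAgs : ∀ {φ : Form}, Prov φ → Prov (ags φ)) (h : Derives Prov Γ φ) :
    Derives Prov (Γ.map ags) (ags φ) := by
  induction h with
  | ax h => exact ax (necAgs h)
  | hyp h => exact hyp (List.mem_map_of_mem h)
  | mp _ _ ih₁ ih₂ => exact mp (mp (ax (kAgs _ _)) ih₁) ih₂

variable (H : ClassicalHilbert Prov)
include H

theorem toProv (h : Derives Prov [] φ) : Prov φ := by
  induction h with
  | ax h => exact h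
  | hyp h => exact absurd h List.not_mem_nil
  | mp _ _ ih₁ ih₂ => exact H.mp ih₁ ih₂

theorem deduction (h : Derives Prov (ψ :: Γ) φ) : Derives Prov Γ (ψ.imp φ) := by
  induction h with
  | ax h => exact mp (ax (H.a1 _ _)) (ax h)
  | hyp h =>
    rcases List.mem_cons.1 h with rfl | h
    · exact ax (H.imp_self _)
    · exact mp (ax (H.a1 _ _)) (hyp h)
  | mp _ _ ih₁ ih₂ => exact mp (mp (ax (H.a2 _ _ _)) ih₁) ih₂

end Derives

theorem ClassicalHilbert.dne {Prov : Form → Prop} (H : ClassicalHilbert Prov) (φ : Form) :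
    Prov ((φ.neg.neg).imp φ) :=
  H.mp (H.a3 φ φ.neg.neg) <| Derives.toProv H <| Derives.deduction H <| Derives.deduction H <|
    .mp (φ := φ.neg) (.hyp List.mem_cons_self) (.hyp (List.mem_cons_of_mem _ List.mem_cons_self))

namespace Derives

variable {Prov : Form → Prop} (H : ClassicalHilbert Prov) {Γ : List Form} {φ ψ : Form}
include H

theorem of_neg_neg (h : Derives Prov Γ φ.neg.neg) : Derives Prov Γ φ :=
  mp (ax (H.dne φ)) h

theorem conj (h₁ : Derives Prov Γ φ) (h₂ : Derives Prov Γ ψ) : Derives Prov Γ (conj φ ψ) :=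
  deduction H <| mp (mp (hyp List.mem_cons_self) (h₁.mono (List.subset_cons_self _ _)))
    (h₂.mono (List.subset_cons_self _ _))

theorem conj_left (h : Derives Prov Γ (Form.conj φ ψ)) : Derives Prov Γ φ :=
  of_neg_neg H <| deduction H <| mp (h.mono (List.subset_cons_self _ _)) <| deduction H <|
    mp (ax (H.a1 bot ψ)) (mp (φ := φ) (hyp (List.mem_cons_of_mem _ List.mem_cons_self)) (hyp List.mem_cons_self))

theorem conj_right (h : Derives Prov Γ (Form.conj φ ψ)) : Derives Prov Γ ψ :=
  of_neg_neg H <| deduction H <| mp (h.mono (List.subset_cons_self _ _)) <|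
    mp (ax (H.a1 ψ.neg φ)) (hyp List.mem_cons_self)

theorem conjList {l : List Form} (h : ∀ φ ∈ l, Derives Prov Γ φ) :
    Derives Prov Γ (Stmt16.conjList l) := by
  induction l with
  | nil => exact ax (H.imp_self bot)
  | cons φ l ih =>
    exact conj H (h φ List.mem_cons_self) (ih fun ψ hψ => h ψ (List.mem_cons_of_mem _ hψ))

theorem of_conjList {l : List Form} (h : Derives Prov Γ (Stmt16.conjList l)) (hφ : φ ∈ l) :
    Derives Prov Γ φ := by
  induction l with
  | nil => exact absurd hφ List.not_mem_nil
  | cons ψ l ih =>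
    rcases List.mem_cons.1 hφ with rfl | hφ
    · exact conj_left H h
    · exact ih (conj_right H h) hφ

end Derives

theorem Consistent.not_derives_bot {Prov : Form → Prop} (H : ClassicalHilbert Prov)
    {Γ : Set Form} (hΓ : Consistent Prov Γ) {l : List Form} (hl : ∀ ψ ∈ l, ψ ∈ Γ) :
    ¬ Derives Prov l bot := fun h =>
  hΓ ⟨l, hl, Derives.toProv H <| Derives.deduction H <|
    h.trans fun _ hψ => (Derives.hyp List.mem_cons_self).of_conjList H hψ⟩

theorem exists_derives_neg_of_not_consistent_insert {Prov : Form → Prop}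
    (H : ClassicalHilbert Prov) {Γ : Set Form} {φ : Form}
    (h : ¬ Consistent Prov (insert φ Γ)) :
    ∃ l : List Form, (∀ ψ ∈ l, ψ ∈ Γ) ∧ Derives Prov l φ.neg := by
  classical
  obtain ⟨m, hm, hprov⟩ := not_not.1 h
  refine ⟨m.filter (· ∈ Γ), fun ψ hψ => by simpa using (List.mem_filter.1 hψ).2,
    Derives.deduction H (.mp (.ax hprov) (Derives.conjList H fun ψ hψ => .hyp ?_))⟩
  rcases hm ψ hψ with rfl | hψΓ
  · exact List.mem_cons_self
  · exact List.mem_cons_of_mem _ (List.mem_filter.2 ⟨hψ, by simpa using hψΓ⟩)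

namespace MCS

variable {Prov : Form → Prop} {w : Set Form} {φ ψ : Form} {l : List Form}

theorem not_consistent_insert (hw : MCS Prov w) (h : φ ∉ w) :
    ¬ Consistent Prov (insert φ w) := fun hc =>
  h (hw.2 _ (Set.subset_insert _ _) hc ▸ Set.mem_insert φ w)

variable (H : ClassicalHilbert Prov)
include H

theorem mem_of_derives (hw : MCS Prov w) (hl : ∀ ψ ∈ l, ψ ∈ w) (h : Derives Prov l φ) :
    φ ∈ w := by
  by_contra hφ
  obtain ⟨m, hm, hneg⟩ :=
    exists_derives_neg_of_not_consistent_insert H (hw.not_consistent_insert hφ)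
  exact hw.1.not_derives_bot H (l := m ++ l) (by simpa [or_imp, forall_and] using ⟨hm, hl⟩)
    (.mp (hneg.mono (List.subset_append_left _ _)) (h.mono (List.subset_append_right _ _)))

theorem neg_mem (hw : MCS Prov w) (h : φ ∉ w) : φ.neg ∈ w :=
  let ⟨_, hm, hneg⟩ := exists_derives_neg_of_not_consistent_insert H (hw.not_consistent_insert h)
  hw.mem_of_derives H hm hneg

theorem bot_not_mem (hw : MCS Prov w) : bot ∉ w := fun h =>
  hw.1.not_derives_bot H (l := [bot]) (by simpa using h) (.hyp List.mem_cons_self)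

theorem mem_of_prov (hw : MCS Prov w) (h : Prov φ) : φ ∈ w :=
  hw.mem_of_derives H (l := []) (by simp) (.ax h)

theorem mem_of_imp_mem (hw : MCS Prov w) (h₁ : φ.imp ψ ∈ w) (h₂ : φ ∈ w) : ψ ∈ w :=
  hw.mem_of_derives H (l := [φ.imp ψ, φ]) (by simp [h₁, h₂])
    (.mp (.hyp List.mem_cons_self) (.hyp (by simp)))

theorem conj_mem (hw : MCS Prov w) (h₁ : φ ∈ w) (h₂ : ψ ∈ w) : conj φ ψ ∈ w :=
  hw.mem_of_derives H (l := [φ, ψ]) (by simp [h₁, h₂])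
    (Derives.conj H (.hyp List.mem_cons_self) (.hyp (by simp)))

theorem conjList_mem (hw : MCS Prov w) (h : ∀ φ ∈ l, φ ∈ w) : conjList l ∈ w :=
  hw.mem_of_derives H h (Derives.conjList H fun _ hφ => .hyp hφ)

theorem mem_of_conjList_mem (hw : MCS Prov w) (h : conjList l ∈ w) (hφ : φ ∈ l) : φ ∈ w :=
  hw.mem_of_derives H (l := [conjList l]) (by simpa using h)
    ((Derives.hyp List.mem_cons_self).of_conjList H hφ)

theorem exists_mem_of_disjList_mem (hw : MCS Prov w) (h : disjList l ∈ w) :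
    ∃ φ ∈ l, φ ∈ w := by
  induction l with
  | nil => exact absurd h (hw.bot_not_mem H)
  | cons ψ l ih =>
    by_cases hψ : ψ ∈ w
    · exact ⟨ψ, List.mem_cons_self, hψ⟩
    · obtain ⟨φ, hφl, hφw⟩ := ih (hw.mem_of_imp_mem H h (hw.neg_mem H hψ))
      exact ⟨φ, List.mem_cons_of_mem _ hφl, hφw⟩

theorem ags_conjList_mem
    (kAgs : ∀ φ ψ : Form, Prov ((ags (φ.imp ψ)).imp ((ags φ).imp (ags ψ))))
    (necAgs : ∀ {φ : Form}, Prov φ → Prov (ags φ)) (hw : MCS Prov w)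
    (h : ∀ φ ∈ l, ags φ ∈ w) : ags (conjList l) ∈ w :=
  hw.mem_of_derives H (l := l.map ags) (by simpa using h)
    ((Derives.conjList H fun _ hφ => .hyp hφ).map_ags kAgs necAgs)

end MCS

def BoxAccess (w v : Set Form) : Prop := ∀ φ, box φ ∈ w → φ ∈ v

namespace MCS

variable {Prov : Form → Prop} (H : ClassicalHilbert Prov) {w u v : Set Form} {ψ : Form}
include H

theorem dia_mem_of_boxAccess (hw : MCS Prov w) (hv : MCS Prov v) (hwv : BoxAccess w v)
    (h : ψ ∈ v) : dia ψ ∈ w := by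
  by_contra hd
  have hbox : box ψ.neg ∈ w := hw.mem_of_imp_mem H (hw.mem_of_prov H (H.dne _)) (hw.neg_mem H hd)
  exact hv.bot_not_mem H (hv.mem_of_imp_mem H (hwv _ hbox) h)

theorem dia_mem_of_boxAccess_of_boxAccess
    (fiveBox : ∀ φ : Form, Prov ((dia φ).imp (box (dia φ))))
    (hw : MCS Prov w) (hu : MCS Prov u) (hwu : BoxAccess w u) (hwv : BoxAccess w v)
    (h : ψ ∈ u) : dia ψ ∈ v :=
  hwv _ <| hw.mem_of_imp_mem H (hw.mem_of_prov H (fiveBox ψ)) (hw.dia_mem_of_boxAccess H hu hwu h)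

end MCS

theorem exists_eq_of_mem_anteList {pre l : List Form} {χ : Form} (h : χ ∈ anteList pre l) :
    ∃ (k : ℕ) (hk : k < l.length),
      χ = dia (conj (conjList ((pre ++ l.take k).map neg)) (ags l[k])) := by
  induction l generalizing pre with
  | nil => simp [anteList] at h
  | cons φ l ih =>
    rcases List.mem_cons.1 h with rfl | h
    · exact ⟨0, by simp, by simp⟩
    · obtain ⟨k, hk, rfl⟩ := ih h
      exact ⟨k + 1, by simpa using hk, by simp⟩

theorem conjList_anteList_ofFn_mem {Prov : Form → Prop} (H : ClassicalHilbert Prov)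
    (fiveBox : ∀ φ : Form, Prov ((dia φ).imp (box (dia φ))))
    {m : ℕ} {w v : Set Form} {u : Fin m → Set Form} {φ : Fin m → Form}
    (hw : MCS Prov w) (hv : MCS Prov v) (hwv : BoxAccess w v)
    (hu : ∀ k, MCS Prov (u k)) (hwu : ∀ k, BoxAccess w (u k))
    (hags : ∀ k, ags (φ k) ∈ u k) (hlt : ∀ j k, j < k → φ j ∉ u k) :
    conjList (anteList [] (List.ofFn φ)) ∈ v := by
  refine hv.conjList_mem H fun χ hχ => ?_
  obtain ⟨k, hk, rfl⟩ := exists_eq_of_mem_anteList hχ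
  rw [List.length_ofFn] at hk
  refine hw.dia_mem_of_boxAccess_of_boxAccess H fiveBox (hu ⟨k, hk⟩) (hwu ⟨k, hk⟩) hwv
    ((hu _).conj_mem H ((hu _).conjList_mem H fun ψ hψ => ?_) (by simpa using hags ⟨k, hk⟩))
  obtain ⟨_, hψ', rfl⟩ := List.mem_map.1 hψ
  rw [List.nil_append] at hψ'
  obtain ⟨j, hj, rfl⟩ := List.mem_take_iff_getElem.1 hψ'
  refine (hu _).neg_mem H ?_
  simpa using hlt _ ⟨k, hk⟩ (by simp only [Fin.mk_lt_mk]; omega)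

theorem exists_ags_separating {Prov : Form → Prop} (H : ClassicalHilbert Prov)
    (kAgs : ∀ φ ψ : Form, Prov ((ags (φ.imp ψ)).imp ((ags φ).imp (ags ψ))))
    (necAgs : ∀ {φ : Form}, Prov φ → Prov (ags φ))
    {ι : Type*} [Fintype ι] {c : ι → Set Form} (hc : ∀ i, MCS Prov (c i))
    (hsep : ∀ i j, i ≠ j → ∃ φ, ags φ ∈ c i ∧ φ ∉ c j) :
    ∃ α : ι → Form, (∀ i, ags (α i) ∈ c i) ∧ ∀ i j, i ≠ j → α i ∉ c j := by
  classical
  -- Extend the separators to a total `f i j`; the value at `i = j` is never used.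
  choose f hf using fun i j => (em (i = j)).elim (fun h => ⟨bot, fun h' => (h' h).elim⟩)
    fun h => (hsep i j h).imp fun _ hφ (_ : i ≠ j) => hφ
  refine ⟨fun i => conjList ((Finset.univ.toList.filter (· ≠ i)).map (f i)), fun i => ?_,
    fun i j hij hmem => (hf i j hij).2 ((hc j).mem_of_conjList_mem H hmem ?_)⟩
  · refine (hc i).ags_conjList_mem H kAgs necAgs fun φ hφ => ?_
    obtain ⟨j, hj, rfl⟩ := List.mem_map.1 hφ
    exact (hf i j (of_decide_eq_true (List.mem_filter.1 hj).2).symm).1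
  · exact List.mem_map_of_mem (List.mem_filter.2 ⟨by simp, by simpa using hij.symm⟩)

theorem choice_bounded_general (n : ℕ) (Prov : Form → Prop)
    (mp : ∀ {φ ψ : Form}, Prov (φ.imp ψ) → Prov φ → Prov ψ)
    (a1 : ∀ φ ψ : Form, Prov (φ.imp (ψ.imp φ)))
    (a2 : ∀ φ ψ χ : Form, Prov ((φ.imp (ψ.imp χ)).imp ((φ.imp ψ).imp (φ.imp χ))))
    (a3 : ∀ φ ψ : Form, Prov (((φ.neg).imp (ψ.neg)).imp (ψ.imp φ)))
    (fiveBox : ∀ φ : Form, Prov ((dia φ).imp (box (dia φ))))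
    (kAgs : ∀ φ ψ : Form, Prov ((ags (φ.imp ψ)).imp ((ags φ).imp (ags ψ))))
    (necAgs : ∀ {φ : Form}, Prov φ → Prov (ags φ))
    -- (AgsPC_n), closed under substitution
    (agspc : ∀ l : List Form, l.length = n →
      Prov ((conjList (anteList [] l)).imp (disjList l))) :
    ∀ (w : Set Form) (c : Fin (n + 1) → Set Form),
      MCS Prov w →
      (∀ i, MCS Prov (c i)) →
      (∀ (i : Fin (n + 1)) (φ : Form), box φ ∈ w → φ ∈ c i) →
      ∃ i j : Fin (n + 1), i ≠ j ∧ (∀ φ : Form, ags φ ∈ c i → φ ∈ c j) := by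
  intro w c hw hc hbox
  have H : ClassicalHilbert Prov := ⟨mp, a1, a2, a3⟩
  by_contra! hsep
  obtain ⟨α, hαc, hα⟩ := exists_ags_separating H kAgs necAgs hc hsep
  have hante : conjList (anteList [] (List.ofFn fun k : Fin n => α k.succ)) ∈ c 0 :=
    conjList_anteList_ofFn_mem H fiveBox hw (hc 0) (hbox 0) (fun _ => hc _) (fun _ => hbox _)
      (fun _ => hαc _) fun _ _ hjk => hα _ _ (Fin.succ_injective _ |>.ne hjk.ne)
  obtain ⟨_, hmem, h0⟩ := (hc 0).exists_mem_of_disjList_mem H <|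
    (hc 0).mem_of_imp_mem H ((hc 0).mem_of_prov H (agspc _ List.length_ofFn)) hante
  obtain ⟨k, rfl⟩ := List.mem_ofFn.1 hmem
  exact hα k.succ 0 (Fin.succ_ne_zero k) h0

/-- Choice-boundedness from the counting axiom. In the canonical
model of Λ_n (S5 for □ and [Ags], the schema □φ→[Ags]φ, the axiom (AgsPC_n)),
for every maximal consistent set w the partition of \bar w induced by the
canonical relation R_{Ags} has at most n cells: among any n+1 members of
\bar w, two are R_{Ags}-related. -/
theorem choice_bounded (n : ℕ) (Prov : Form → Prop)
    (consis : ¬ Prov Form.bot)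
    (mp : ∀ {φ ψ : Form}, Prov (φ.imp ψ) → Prov φ → Prov ψ)
    (a1 : ∀ φ ψ : Form, Prov (φ.imp (ψ.imp φ)))
    (a2 : ∀ φ ψ χ : Form, Prov ((φ.imp (ψ.imp χ)).imp ((φ.imp ψ).imp (φ.imp χ))))
    (a3 : ∀ φ ψ : Form, Prov (((φ.neg).imp (ψ.neg)).imp (ψ.imp φ)))
    (kBox : ∀ φ ψ : Form, Prov ((box (φ.imp ψ)).imp ((box φ).imp (box ψ))))
    (tBox : ∀ φ : Form, Prov ((box φ).imp φ))
    (fourBox : ∀ φ : Form, Prov ((box φ).imp (box (box φ))))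
    (fiveBox : ∀ φ : Form, Prov ((dia φ).imp (box (dia φ))))
    (necBox : ∀ {φ : Form}, Prov φ → Prov (box φ))
    (kAgs : ∀ φ ψ : Form, Prov ((ags (φ.imp ψ)).imp ((ags φ).imp (ags ψ))))
    (tAgs : ∀ φ : Form, Prov ((ags φ).imp φ))
    (fourAgs : ∀ φ : Form, Prov ((ags φ).imp (ags (ags φ))))
    (fiveAgs : ∀ φ : Form, Prov ((diaAgs φ).imp (ags (diaAgs φ))))
    (necAgs : ∀ {φ : Form}, Prov φ → Prov (ags φ))
    (set_ax : ∀ φ : Form, Prov ((box φ).imp (ags φ)))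
    -- (AgsPC_n), closed under substitution
    (agspc : ∀ l : List Form, l.length = n →
      Prov ((conjList (anteList [] l)).imp (disjList l))) :
    ∀ (w : Set Form) (c : Fin (n + 1) → Set Form),
      MCS Prov w →
      (∀ i, MCS Prov (c i)) →
      (∀ (i : Fin (n + 1)) (φ : Form), box φ ∈ w → φ ∈ c i) →
      ∃ i j : Fin (n + 1), i ≠ j ∧ (∀ φ : Form, ags φ ∈ c i → φ ∈ c j) :=
  choice_bounded_general n Prov mp a1 a2 a3 fiveBox kAgs necAgs agspc

end Stmt16
end

section
/- Uniformity transfer in the canonical model: if Λ contains S5 axioms for □ and K_α and the axiom (Unif-H): ◇K_αp → K_α◇p, then in the canonical model, whenever there exist maximal consistent sets v ∈ \bar{w_1} and u ∈ \bar{w_2} with v ≈_α u, then for every v' ∈ \bar{w_1} there exists u' ∈ \bar{w_2} with v' ≈_α u', where ≈_α is the canonical relation of K_α and \bar{w} the R_□-class of w. -/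
namespace Stmt18

/-- Formulas with □ and K_α. -/
inductive Form : Type
  | var : Nat → Form
  | bot : Form
  | imp : Form → Form → Form
  | box : Form → Form
  | know : Form → Form

namespace Form
def neg (φ : Form) : Form := imp φ bot
def conj (φ ψ : Form) : Form := neg (imp φ (neg ψ))
def top : Form := neg bot
def dia (φ : Form) : Form := neg (box (neg φ))
def diaK (φ : Form) : Form := neg (know (neg φ))
end Form

def conjList : List Form → Form
  | [] => Form.top
  | φ :: l => Form.conj φ (conjList l)

def Consistent (Prov : Form → Prop) (Γ : Set Form) : Prop :=
  ¬ ∃ l : List Form, (∀ φ ∈ l, φ ∈ Γ) ∧ Prov ((conjList l).imp Form.bot)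

def MCS (Prov : Form → Prop) (w : Set Form) : Prop :=
  Consistent Prov w ∧ ∀ Γ, w ⊆ Γ → Consistent Prov Γ → Γ = w

open Form

/-- Canonical relation of □. -/
def Rbox (w v : Set Form) : Prop := ∀ φ : Form, Form.box φ ∈ w → φ ∈ v

/-- Canonical relation of K_α. -/
def Rknow (w v : Set Form) : Prop := ∀ φ : Form, Form.know φ ∈ w → φ ∈ v

/-!
Let `Ψ` be a conjunction of formulas known in `v'` and `B` a conjunction of formulas boxed in
`w₂`, and suppose `⊢ B → ¬Ψ`. Since `v` and `v'` lie in one S5-cluster, `K Ψ ∈ v'` gives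
`◇K Ψ ∈ v`, so `K ◇Ψ ∈ v` by (Unif-H) and `◇Ψ ∈ u`. By axiom 4, `□B ∈ u`, hence `□¬Ψ ∈ u`,
a contradiction. So the formulas known in `v'` together with those boxed in `w₂` are consistent,
and a Lindenbaum extension of them is the required `u'`.
-/

structure IsHilbertCalculus (Prov : Form → Prop) : Prop where
  mp : ∀ {φ ψ : Form}, Prov (φ.imp ψ) → Prov φ → Prov ψ
  ax1 : ∀ φ ψ : Form, Prov (φ.imp (ψ.imp φ))
  ax2 : ∀ φ ψ χ : Form, Prov ((φ.imp (ψ.imp χ)).imp ((φ.imp ψ).imp (φ.imp χ)))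
  ax3 : ∀ φ ψ : Form, Prov (((φ.neg).imp (ψ.neg)).imp (ψ.imp φ))

structure IsNormalModality (Prov : Form → Prop) (m : Form → Form) : Prop where
  distrib : ∀ φ ψ : Form, Prov ((m (φ.imp ψ)).imp ((m φ).imp (m ψ)))
  nec : ∀ {φ : Form}, Prov φ → Prov (m φ)

namespace IsHilbertCalculus

variable {Prov : Form → Prop} (H : IsHilbertCalculus Prov)
include H

theorem imp_self (φ : Form) : Prov (φ.imp φ) :=
  H.mp (H.mp (H.ax2 φ (φ.imp φ) φ) (H.ax1 φ (φ.imp φ))) (H.ax1 φ φ)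

theorem imp_postcomp (φ : Form) {ψ χ : Form} (h : Prov (ψ.imp χ)) :
    Prov ((φ.imp ψ).imp (φ.imp χ)) :=
  H.mp (H.ax2 φ ψ χ) (H.mp (H.ax1 (ψ.imp χ) φ) h)

theorem imp_trans {φ ψ χ : Form} (h₁ : Prov (φ.imp ψ)) (h₂ : Prov (ψ.imp χ)) :
    Prov (φ.imp χ) :=
  H.mp (H.imp_postcomp φ h₂) h₁

theorem imp_mp {φ ψ χ : Form} (h₁ : Prov (φ.imp (ψ.imp χ))) (h₂ : Prov (φ.imp ψ)) :
    Prov (φ.imp χ) :=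
  H.mp (H.mp (H.ax2 φ ψ χ) h₁) h₂

theorem imp_comm {φ ψ χ : Form} (h : Prov (φ.imp (ψ.imp χ))) : Prov (ψ.imp (φ.imp χ)) :=
  H.imp_trans (H.ax1 ψ φ) (H.mp (H.ax2 φ ψ χ) h)

theorem imp_precomp {φ ψ : Form} (h : Prov (φ.imp ψ)) (χ : Form) :
    Prov ((ψ.imp χ).imp (φ.imp χ)) :=
  H.imp_comm (H.imp_trans h (H.imp_comm (H.imp_self (ψ.imp χ))))

theorem imp_imp_comm (φ ψ χ : Form) : Prov ((φ.imp (ψ.imp χ)).imp (ψ.imp (φ.imp χ))) :=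
  H.imp_trans (H.ax2 φ ψ χ) (H.imp_precomp (H.ax1 ψ φ) (φ.imp χ))

theorem bot_imp (φ : Form) : Prov (bot.imp φ) :=
  H.mp (H.ax3 φ bot) (H.mp (H.ax1 (bot.imp bot) φ.neg) (H.imp_self bot))

theorem neg_neg_imp (φ : Form) : Prov (φ.neg.neg.imp φ) :=
  H.mp (H.ax3 φ φ.neg.neg) (H.imp_comm (H.imp_self φ.neg.neg))

theorem imp_neg_neg (φ : Form) : Prov (φ.imp φ.neg.neg) :=
  H.imp_comm (H.imp_self φ.neg)

theorem imp_imp_conj (φ ψ : Form) : Prov (φ.imp (ψ.imp (conj φ ψ))) :=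
  H.imp_trans (H.imp_comm (H.imp_self (φ.imp ψ.neg))) (H.imp_imp_comm (φ.imp ψ.neg) ψ bot)

theorem conj_imp_left (φ ψ : Form) : Prov ((conj φ ψ).imp φ) :=
  H.imp_trans (H.imp_precomp (H.imp_postcomp φ (H.bot_imp ψ.neg)) bot) (H.neg_neg_imp φ)

theorem conj_imp_right (φ ψ : Form) : Prov ((conj φ ψ).imp ψ) :=
  H.imp_trans (H.imp_precomp (H.ax1 ψ.neg φ) bot) (H.neg_neg_imp ψ)

theorem imp_imp_of_conj_imp {φ ψ χ : Form} (h : Prov ((conj φ ψ).imp χ)) :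
    Prov (φ.imp (ψ.imp χ)) :=
  H.imp_trans (H.imp_imp_conj φ ψ) (H.imp_postcomp ψ h)

theorem conjList_imp_of_mem {l : List Form} {χ : Form} (h : χ ∈ l) :
    Prov ((conjList l).imp χ) := by
  induction l with
  | nil => simp at h
  | cons φ l ih =>
    rcases List.mem_cons.1 h with rfl | h
    · exact H.conj_imp_left χ (conjList l)
    · exact H.imp_trans (H.conj_imp_right φ (conjList l)) (ih h)

theorem imp_conjList {A : Form} {l : List Form} (h : ∀ χ ∈ l, Prov (A.imp χ)) :
    Prov (A.imp (conjList l)) := by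
  induction l with
  | nil => exact H.mp (H.ax1 top A) (H.imp_self bot)
  | cons φ l ih =>
    exact H.imp_mp (H.imp_trans (h φ List.mem_cons_self) (H.imp_imp_conj φ (conjList l)))
      (ih fun χ hχ => h χ (List.mem_cons_of_mem φ hχ))

theorem conjList_imp_conjList {l l' : List Form} (h : ∀ χ ∈ l, χ ∈ l') :
    Prov ((conjList l').imp (conjList l)) :=
  H.imp_conjList fun χ hχ => H.conjList_imp_of_mem (h χ hχ)

theorem conjList_imp_imp_conjList_append (l₁ l₂ : List Form) :
    Prov ((conjList l₁).imp ((conjList l₂).imp (conjList (l₁ ++ l₂)))) :=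
  H.imp_imp_of_conj_imp <| H.imp_conjList fun χ hχ => by
    rcases List.mem_append.1 hχ with h | h
    · exact H.imp_trans (H.conj_imp_left _ _) (H.conjList_imp_of_mem h)
    · exact H.imp_trans (H.conj_imp_right _ _) (H.conjList_imp_of_mem h)

theorem exists_prov_of_not_consistent_union {Γ Δ : Set Form}
    (h : ¬ Consistent Prov (Γ ∪ Δ)) :
    ∃ l₁ l₂ : List Form, (∀ φ ∈ l₁, φ ∈ Γ) ∧ (∀ φ ∈ l₂, φ ∈ Δ) ∧
      Prov ((conjList l₁).imp ((conjList l₂).imp bot)) := by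
  classical
  obtain ⟨l, hl, hbot⟩ := not_not.1 h
  refine ⟨l.filter (· ∈ Γ), l.filter (· ∈ Δ), by simp, by simp, ?_⟩
  have hcover : ∀ φ ∈ l, φ ∈ l.filter (· ∈ Γ) ++ l.filter (· ∈ Δ) := fun φ hφ => by
    simpa [hφ] using hl φ hφ
  exact H.imp_trans (H.conjList_imp_imp_conjList_append _ _)
    (H.imp_postcomp _ (H.imp_trans (H.conjList_imp_conjList hcover) hbot))

end IsHilbertCalculus

theorem IsNormalModality.conjList_map_imp {Prov : Form → Prop} {m : Form → Form}
    (H : IsHilbertCalculus Prov) (hm : IsNormalModality Prov m) :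
    ∀ l : List Form, Prov ((conjList (l.map m)).imp (m (conjList l)))
  | [] => H.mp (H.ax1 _ _) (hm.nec (H.imp_self bot))
  | φ :: l => by
    have hpair : Prov ((m φ).imp ((m (conjList l)).imp (m (conj φ (conjList l))))) :=
      H.imp_trans (H.mp (hm.distrib _ _) (hm.nec (H.imp_imp_conj φ (conjList l))))
        (hm.distrib _ _)
    exact H.imp_mp (H.imp_trans (H.conj_imp_left _ _) hpair)
      (H.imp_trans (H.conj_imp_right _ _) (hm.conjList_map_imp H l))

theorem isOfFiniteCharacter_consistent (Prov : Form → Prop) :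
    Order.IsOfFiniteCharacter {Γ | Consistent Prov Γ} := by
  refine fun Γ => ⟨fun hΓ Δ hΔΓ _ ⟨l, hl, hbot⟩ => hΓ ⟨l, fun φ hφ => hΔΓ (hl φ hφ), hbot⟩,
    fun h ⟨l, hl, hbot⟩ => ?_⟩
  exact h {φ | φ ∈ l} hl l.finite_toSet ⟨l, fun _ hφ => hφ, hbot⟩

theorem Consistent.exists_mcs_superset {Prov : Form → Prop} {Γ : Set Form}
    (h : Consistent Prov Γ) : ∃ w, Γ ⊆ w ∧ MCS Prov w := by
  obtain ⟨w, hΓw, hmax⟩ := (isOfFiniteCharacter_consistent Prov).exists_maximal h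
  exact ⟨w, hΓw, hmax.prop, fun Δ hwΔ hΔ => (hmax.eq_of_subset hΔ hwΔ).symm⟩

namespace MCS

variable {Prov : Form → Prop} (H : IsHilbertCalculus Prov) {w : Set Form}
include H

theorem exists_prov_imp_neg_of_not_mem (hw : MCS Prov w) {φ : Form} (hφ : φ ∉ w) :
    ∃ l : List Form, (∀ χ ∈ l, χ ∈ w) ∧ Prov ((conjList l).imp φ.neg) := by
  have hincons : ¬ Consistent Prov ({φ} ∪ w) := fun hcons =>
    hφ (hw.2 _ Set.subset_union_right hcons ▸ Set.mem_union_left w rfl)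
  obtain ⟨l₁, l₂, hl₁, hl₂, hbot⟩ := H.exists_prov_of_not_consistent_union hincons
  have hφl₁ : Prov (φ.imp (conjList l₁)) :=
    H.imp_conjList fun χ hχ => (hl₁ χ hχ : χ = φ) ▸ H.imp_self χ
  exact ⟨l₂, hl₂, H.imp_comm (H.imp_trans hφl₁ hbot)⟩

theorem mem_of_prov_conjList_imp (hw : MCS Prov w) {l : List Form} (hl : ∀ χ ∈ l, χ ∈ w)
    {φ : Form} (h : Prov ((conjList l).imp φ)) : φ ∈ w := by
  by_contra hφ
  obtain ⟨l', hl', hneg⟩ := hw.exists_prov_imp_neg_of_not_mem H hφ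
  refine hw.1 ⟨l ++ l', fun χ hχ => (List.mem_append.1 hχ).elim (hl χ) (hl' χ), ?_⟩
  exact H.imp_mp
    (H.imp_trans (H.conjList_imp_conjList fun _ => List.mem_append_right l) hneg)
    (H.imp_trans (H.conjList_imp_conjList fun _ => List.mem_append_left l') h)

theorem mem_of_mem_of_prov_imp (hw : MCS Prov w) {φ ψ : Form} (hφ : φ ∈ w)
    (h : Prov (φ.imp ψ)) : ψ ∈ w :=
  hw.mem_of_prov_conjList_imp H (l := [φ]) (by simpa using hφ)
    (H.imp_trans (H.conj_imp_left φ top) h)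

theorem neg_mem_of_not_mem (hw : MCS Prov w) {φ : Form} (hφ : φ ∉ w) : φ.neg ∈ w :=
  let ⟨_, hl, hneg⟩ := hw.exists_prov_imp_neg_of_not_mem H hφ
  hw.mem_of_prov_conjList_imp H hl hneg

theorem neg_not_mem_of_mem (hw : MCS Prov w) {φ : Form} (hφ : φ ∈ w) : φ.neg ∉ w :=
  fun hneg => hw.1 ⟨[φ, φ.neg], by simp [hφ, hneg],
    H.imp_mp (H.conjList_imp_of_mem (χ := φ.neg) (by simp))
      (H.conjList_imp_of_mem (χ := φ) (by simp))⟩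

theorem modal_mem_of_prov_conjList_imp {m : Form → Form} (hm : IsNormalModality Prov m)
    (hw : MCS Prov w) {l : List Form} (hl : ∀ ψ ∈ l, m ψ ∈ w) {φ : Form}
    (h : Prov ((conjList l).imp φ)) : m φ ∈ w :=
  hw.mem_of_prov_conjList_imp H (l := l.map m) (by simpa using hl)
    (H.imp_trans (hm.conjList_map_imp H l) (H.mp (hm.distrib _ _) (hm.nec h)))

theorem dia_mem_of_Rbox (hw : MCS Prov w) {v : Set Form} (hv : MCS Prov v) (hwv : Rbox w v)
    {φ : Form} (hφ : φ ∈ v) : dia φ ∈ w := by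
  by_contra hdia
  have hbox : box φ.neg ∈ w :=
    hw.mem_of_mem_of_prov_imp H (hw.neg_mem_of_not_mem H hdia) (H.neg_neg_imp _)
  exact hv.neg_not_mem_of_mem H hφ (hwv _ hbox)

end MCS

section S5Box

variable {Prov : Form → Prop} (H : IsHilbertCalculus Prov)
include H

theorem Rbox.symm (hbox : IsNormalModality Prov box) (tBox : ∀ φ : Form, Prov ((box φ).imp φ))
    (fiveBox : ∀ φ : Form, Prov ((dia φ).imp (box (dia φ))))
    {a b : Set Form} (ha : MCS Prov a) (hb : MCS Prov b) (hab : Rbox a b) : Rbox b a := by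
  intro φ hφ
  by_contra hφa
  -- `¬φ → ◇¬φ → □◇¬φ` by T and 5, while `◇¬φ` is `¬□¬¬φ`
  have hdia : dia φ.neg ∈ b := hab _ <| ha.mem_of_mem_of_prov_imp H (ha.neg_mem_of_not_mem H hφa)
    (H.imp_trans (H.imp_trans (H.imp_neg_neg _) (H.imp_precomp (tBox _) bot)) (fiveBox _))
  have hbox : box φ.neg.neg ∈ b :=
    hb.modal_mem_of_prov_conjList_imp H hbox (l := [φ]) (by simpa using hφ)
      (H.imp_trans (H.conj_imp_left _ _) (H.imp_neg_neg φ))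
  exact hb.neg_not_mem_of_mem H hbox hdia

theorem box_mem_of_Rbox (fourBox : ∀ φ : Form, Prov ((box φ).imp (box (box φ))))
    {a b : Set Form} (ha : MCS Prov a) (hab : Rbox a b) {φ : Form} (hφ : box φ ∈ a) :
    box φ ∈ b :=
  hab _ (ha.mem_of_mem_of_prov_imp H hφ (fourBox φ))

theorem Rbox.trans (fourBox : ∀ φ : Form, Prov ((box φ).imp (box (box φ))))
    {a b c : Set Form} (ha : MCS Prov a) (hab : Rbox a b) (hbc : Rbox b c) : Rbox a c :=
  fun _ hφ => hbc _ (box_mem_of_Rbox H fourBox ha hab hφ)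

end S5Box

theorem consistent_know_union_box {Prov : Form → Prop} (H : IsHilbertCalculus Prov)
    (hbox : IsNormalModality Prov box) (hknow : IsNormalModality Prov know)
    (fourBox : ∀ φ : Form, Prov ((box φ).imp (box (box φ))))
    (unifH : ∀ φ : Form, Prov ((dia (know φ)).imp (know (dia φ))))
    {w v v' u : Set Form} (hw : MCS Prov w) (hv : MCS Prov v) (hv' : MCS Prov v')
    (hu : MCS Prov u) (hvv' : Rbox v v') (hwu : Rbox w u) (hvu : Rknow v u) :
    Consistent Prov ({ψ | know ψ ∈ v'} ∪ {ψ | box ψ ∈ w}) := by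
  by_contra hincons
  obtain ⟨lK, lB, hlK, hlB, hbot⟩ := H.exists_prov_of_not_consistent_union hincons
  set Ψ := conjList lK
  have hKΨ : know Ψ ∈ v' := hv'.modal_mem_of_prov_conjList_imp H hknow hlK (H.imp_self Ψ)
  have hdiaΨ : dia Ψ ∈ u := hvu _ <| hv.mem_of_mem_of_prov_imp H
    (hv.dia_mem_of_Rbox H hv' hvv' hKΨ) (unifH Ψ)
  have hboxnegΨ : box Ψ.neg ∈ u :=
    hu.modal_mem_of_prov_conjList_imp H hbox
      (fun ψ hψ => box_mem_of_Rbox H fourBox hw hwu (hlB ψ hψ)) (H.imp_comm hbot)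
  exact hu.neg_not_mem_of_mem H hboxnegΨ hdiaΨ

theorem canonical_uniformity_transfer_general (Prov : Form → Prop)
    (mp : ∀ {φ ψ : Form}, Prov (φ.imp ψ) → Prov φ → Prov ψ)
    (a1 : ∀ φ ψ : Form, Prov (φ.imp (ψ.imp φ)))
    (a2 : ∀ φ ψ χ : Form, Prov ((φ.imp (ψ.imp χ)).imp ((φ.imp ψ).imp (φ.imp χ))))
    (a3 : ∀ φ ψ : Form, Prov (((φ.neg).imp (ψ.neg)).imp (ψ.imp φ)))
    (kBox : ∀ φ ψ : Form, Prov ((box (φ.imp ψ)).imp ((box φ).imp (box ψ))))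
    (tBox : ∀ φ : Form, Prov ((box φ).imp φ))
    (fourBox : ∀ φ : Form, Prov ((box φ).imp (box (box φ))))
    (fiveBox : ∀ φ : Form, Prov ((dia φ).imp (box (dia φ))))
    (necBox : ∀ {φ : Form}, Prov φ → Prov (box φ))
    (kK : ∀ φ ψ : Form, Prov ((know (φ.imp ψ)).imp ((know φ).imp (know ψ))))
    (necK : ∀ {φ : Form}, Prov φ → Prov (know φ))
    (unifH : ∀ φ : Form, Prov ((dia (know φ)).imp (know (dia φ)))) :
    ∀ w₁ w₂ v u : Set Form,
      MCS Prov w₁ → MCS Prov w₂ → MCS Prov v → MCS Prov u →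
      Rbox w₁ v → Rbox w₂ u → Rknow v u →
      ∀ v' : Set Form, MCS Prov v' → Rbox w₁ v' →
        ∃ u' : Set Form, MCS Prov u' ∧ Rbox w₂ u' ∧ Rknow v' u' := by
  intro w₁ w₂ v u hw₁ hw₂ hv hu hw₁v hw₂u hvu v' hv' hw₁v'
  have H : IsHilbertCalculus Prov := ⟨mp, a1, a2, a3⟩
  have hbox : IsNormalModality Prov box := ⟨kBox, necBox⟩
  have hvv' : Rbox v v' := (hw₁v.symm H hbox tBox fiveBox hw₁ hv).trans H fourBox hv hw₁v'
  obtain ⟨u', hsub, hu'⟩ := (consistent_know_union_box H hbox ⟨kK, necK⟩ fourBox unifH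
    hw₂ hv hv' hu hvv' hw₂u hvu).exists_mcs_superset
  exact ⟨u', hu', fun _ h => hsub (Or.inr h), fun _ h => hsub (Or.inl h)⟩

/-- Uniformity transfer in the canonical model. If Λ contains
S5 for □ and K_α and the axiom (Unif-H): ◇K_αp → K_α◇p, then whenever there
are maximal consistent sets v ∈ \bar{w₁} and u ∈ \bar{w₂} with v ≈_α u,
then for every maximal consistent v' ∈ \bar{w₁} there exists a maximal
consistent u' ∈ \bar{w₂} with v' ≈_α u'. -/
theorem canonical_uniformity_transfer (Prov : Form → Prop)
    (consis : ¬ Prov Form.bot)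
    (mp : ∀ {φ ψ : Form}, Prov (φ.imp ψ) → Prov φ → Prov ψ)
    (a1 : ∀ φ ψ : Form, Prov (φ.imp (ψ.imp φ)))
    (a2 : ∀ φ ψ χ : Form, Prov ((φ.imp (ψ.imp χ)).imp ((φ.imp ψ).imp (φ.imp χ))))
    (a3 : ∀ φ ψ : Form, Prov (((φ.neg).imp (ψ.neg)).imp (ψ.imp φ)))
    (kBox : ∀ φ ψ : Form, Prov ((box (φ.imp ψ)).imp ((box φ).imp (box ψ))))
    (tBox : ∀ φ : Form, Prov ((box φ).imp φ))
    (fourBox : ∀ φ : Form, Prov ((box φ).imp (box (box φ))))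
    (fiveBox : ∀ φ : Form, Prov ((dia φ).imp (box (dia φ))))
    (necBox : ∀ {φ : Form}, Prov φ → Prov (box φ))
    (kK : ∀ φ ψ : Form, Prov ((know (φ.imp ψ)).imp ((know φ).imp (know ψ))))
    (tK : ∀ φ : Form, Prov ((know φ).imp φ))
    (fourK : ∀ φ : Form, Prov ((know φ).imp (know (know φ))))
    (fiveK : ∀ φ : Form, Prov ((diaK φ).imp (know (diaK φ))))
    (necK : ∀ {φ : Form}, Prov φ → Prov (know φ))
    (unifH : ∀ φ : Form, Prov ((dia (know φ)).imp (know (dia φ)))) :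
    ∀ w₁ w₂ v u : Set Form,
      MCS Prov w₁ → MCS Prov w₂ → MCS Prov v → MCS Prov u →
      Rbox w₁ v → Rbox w₂ u → Rknow v u →
      ∀ v' : Set Form, MCS Prov v' → Rbox w₁ v' →
        ∃ u' : Set Form, MCS Prov u' ∧ Rbox w₂ u' ∧ Rknow v' u' :=
  canonical_uniformity_transfer_general Prov mp a1 a2 a3 kBox tBox fourBox fiveBox necBox kK necK
    unifH

end Stmt18
end
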